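/- arXiv:1810.07014 — 6 statements merged into one kernel-verified Lean document; each statement's English description precedes it below -/
import Mathlib

section
/- Let m ≥ 1, f : [0,1]^m → ℝ be twice continuously differentiable and strictly convex, and C > 0 be such that C·H_KL(p) − ∇²f(p) is positive definite for all p in the open cube (0,1)^m, where H_KL(p) is the diagonal matrix with entries 1/p_i. Then for all p, q ∈ (0,1)^m, C·D̃_KL(p‖q) ≥ D_f(p‖q). -/
open Real Set

theorem kl_dominates_bregman_multivariate
    (m : ℕ) (hm : 1 ≤ m)
    (f : (Fin m → ℝ) → ℝ)
    (f' : (Fin m → ℝ) → ((Fin m → ℝ) →L[ℝ] ℝ))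
    (f'' : (Fin m → ℝ) → ((Fin m → ℝ) →L[ℝ] ((Fin m → ℝ) →L[ℝ] ℝ)))
    (C : ℝ) (hC : 0 < C)
    (hconv : StrictConvexOn ℝ {p : Fin m → ℝ | ∀ i, p i ∈ Icc (0:ℝ) 1} f)
    (hf' : ∀ p, (∀ i, p i ∈ Ioo (0:ℝ) 1) → HasFDerivAt f (f' p) p)
    (hf'' : ∀ p, (∀ i, p i ∈ Ioo (0:ℝ) 1) → HasFDerivAt f' (f'' p) p)
    (hf''cont : ContinuousOn f'' {p : Fin m → ℝ | ∀ i, p i ∈ Ioo (0:ℝ) 1})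
    (hPD : ∀ p, (∀ i, p i ∈ Ioo (0:ℝ) 1) → ∀ x : Fin m → ℝ, x ≠ 0 →
        f'' p x x < C * ∑ i, x i ^ 2 / p i) :
    ∀ p q : Fin m → ℝ, (∀ i, p i ∈ Ioo (0:ℝ) 1) → (∀ i, q i ∈ Ioo (0:ℝ) 1) →
      f p - f q - f' q (p - q)
        ≤ C * ∑ i, (p i * Real.log (p i / q i) - p i + q i) := by
  intro p q hp hq
  by_cases hpq : p = q
  · subst hpq
    have h0 : ∀ i : Fin m, p i * Real.log (p i / p i) - p i + p i = 0 := by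
      intro i
      rw [div_self (hp i).1.ne']
      simp
    simp [h0]
  -- p ≠ q
  set v : Fin m → ℝ := p - q with hv
  have hvne : v ≠ 0 := sub_ne_zero.mpr hpq
  set x : ℝ → (Fin m → ℝ) := fun t => q + t • v with hxdef
  have hx0 : x 0 = q := by simp [hxdef]
  have hx1 : x 1 = p := by simp [hxdef, hv]
  have hxi : ∀ t i, x t i = q i + t * v i := by intro t i; simp [hxdef]
  have hxmem : ∀ t ∈ Icc (0:ℝ) 1, ∀ i, x t i ∈ Ioo (0:ℝ) 1 := by
    intro t ht i
    have := (convex_Ioo (0:ℝ) 1).add_smul_sub_mem (hq i) (hp i) ht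
    simpa [hxi, hv, smul_eq_mul] using this
  have hxderiv : ∀ t : ℝ, HasDerivAt x v t := by
    intro t
    simpa [hxdef] using ((hasDerivAt_id t).smul_const v).const_add q
  -- the KL part
  set A : ℝ → ℝ := fun t => ∑ i, (x t i * (Real.log (x t i) - Real.log (q i)) - x t i + q i)
    with hAdef
  set A' : ℝ → ℝ := fun t => ∑ i, v i * (Real.log (x t i) - Real.log (q i)) with hA'def
  set A'' : ℝ → ℝ := fun t => ∑ i, v i ^ 2 / x t i with hA''def
  have hxci : ∀ t i, HasDerivAt (fun s => x s i) (v i) t := by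
    intro t i
    simpa [hxi, mul_comm] using ((hasDerivAt_id t).const_mul (v i)).const_add (q i)
  have hA : ∀ t ∈ Icc (0:ℝ) 1, HasDerivAt A (A' t) t := by
    intro t ht
    apply HasDerivAt.fun_sum
    intro i _
    have hpos : x t i ≠ 0 := (hxmem t ht i).1.ne'
    have h1 : HasDerivAt (fun s => x s i * Real.log (x s i))
        ((Real.log (x t i) + 1) * v i) t :=
      by have := (Real.hasDerivAt_mul_log hpos).comp t (hxci t i); exact this
    have h2 : HasDerivAt (fun s => x s i * Real.log (q i)) (v i * Real.log (q i)) t :=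
      (hxci t i).mul_const _
    have h3 : HasDerivAt
        (fun s => x s i * Real.log (x s i) - x s i * Real.log (q i) - x s i + q i)
        ((Real.log (x t i) + 1) * v i - v i * Real.log (q i) - v i) t :=
      ((h1.sub h2).sub (hxci t i)).add_const (q i)
    have heq : (fun s => x s i * Real.log (x s i) - x s i * Real.log (q i) - x s i + q i)
        = fun s => x s i * (Real.log (x s i) - Real.log (q i)) - x s i + q i := by
      funext s; ring
    rw [heq] at h3
    exact h3.congr_deriv (by ring)
  have hA2 : ∀ t ∈ Icc (0:ℝ) 1, HasDerivAt A' (A'' t) t := by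
    intro t ht
    apply HasDerivAt.fun_sum
    intro i _
    have hpos : x t i ≠ 0 := (hxmem t ht i).1.ne'
    have h1 : HasDerivAt (fun s => Real.log (x s i)) (v i / x t i) t := by
      simpa [div_eq_mul_inv, mul_comm, Function.comp_def] using (Real.hasDerivAt_log hpos).comp t (hxci t i)
    have h2 : HasDerivAt (fun s => v i * (Real.log (x s i) - Real.log (q i)))
        (v i * (v i / x t i)) t := ((h1.sub_const _).const_mul (v i))
    exact h2.congr_deriv (by ring)
  -- the Bregman part
  set B : ℝ → ℝ := fun t => f (x t) - f q - f' q (x t - q) with hBdef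
  set B' : ℝ → ℝ := fun t => f' (x t) v - f' q v with hB'def
  set B'' : ℝ → ℝ := fun t => f'' (x t) v v with hB''def
  have hB : ∀ t ∈ Icc (0:ℝ) 1, HasDerivAt B (B' t) t := by
    intro t ht
    have h1 : HasDerivAt (fun s => f (x s)) (f' (x t) v) t :=
      (hf' (x t) (hxmem t ht)).comp_hasDerivAt t (hxderiv t)
    have h2 : HasDerivAt (fun s => f' q (x s - q)) (f' q v) t := by
      have hd : HasDerivAt (fun s => x s - q) v t := (hxderiv t).sub_const q
      exact (f' q).hasFDerivAt.comp_hasDerivAt t hd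
    exact (h1.sub_const (f q)).sub h2
  have hB2 : ∀ t ∈ Icc (0:ℝ) 1, HasDerivAt B' (B'' t) t := by
    intro t ht
    have h1 : HasDerivAt (fun s => f' (x s)) (f'' (x t) v) t :=
      (hf'' (x t) (hxmem t ht)).comp_hasDerivAt t (hxderiv t)
    have h2 : HasDerivAt (fun s => f' (x s) v) (f'' (x t) v v) t := by
      have := h1.clm_apply (hasDerivAt_const t v)
      simpa using this
    simpa [hB'def, hB''def] using h2.sub_const (f' q v)
  -- combine
  set φ : ℝ → ℝ := fun t => C * A t - B t with hφdef
  set φ' : ℝ → ℝ := fun t => C * A' t - B' t with hφ'def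
  have hφ : ∀ t ∈ Icc (0:ℝ) 1, HasDerivAt φ (φ' t) t := by
    intro t ht
    exact ((hA t ht).const_mul C).sub (hB t ht)
  have hφ2 : ∀ t ∈ Icc (0:ℝ) 1, HasDerivAt φ' (C * A'' t - B'' t) t := by
    intro t ht
    exact ((hA2 t ht).const_mul C).sub (hB2 t ht)
  have hpos'' : ∀ t ∈ Icc (0:ℝ) 1, 0 < C * A'' t - B'' t := by
    intro t ht
    have := hPD (x t) (hxmem t ht) v hvne
    simp only [hA''def, hB''def]
    linarith
  -- φ' strictly monotone on [0,1]
  have hmono' : StrictMonoOn φ' (Icc (0:ℝ) 1) := by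
    apply strictMonoOn_of_deriv_pos (convex_Icc 0 1)
    · intro t ht
      exact (hφ2 t ht).continuousAt.continuousWithinAt
    · intro t ht
      rw [interior_Icc] at ht
      rw [(hφ2 t (Ioo_subset_Icc_self ht)).deriv]
      exact hpos'' t (Ioo_subset_Icc_self ht)
  have hφ'0 : φ' 0 = 0 := by
    simp [hφ'def, hA'def, hB'def, hx0]
  have hφ'pos : ∀ t ∈ Ioo (0:ℝ) 1, 0 < φ' t := by
    intro t ht
    have := hmono' (left_mem_Icc.mpr zero_le_one) (Ioo_subset_Icc_self ht) ht.1
    linarith [hφ'0]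
  have hmono : StrictMonoOn φ (Icc (0:ℝ) 1) := by
    apply strictMonoOn_of_deriv_pos (convex_Icc 0 1)
    · intro t ht
      exact (hφ t ht).continuousAt.continuousWithinAt
    · intro t ht
      rw [interior_Icc] at ht
      rw [(hφ t (Ioo_subset_Icc_self ht)).deriv]
      exact hφ'pos t ht
  have hφ0 : φ 0 = 0 := by
    simp [hφdef, hAdef, hBdef, hx0]
  have hfinal : 0 < φ 1 := by
    have := hmono (left_mem_Icc.mpr zero_le_one) (right_mem_Icc.mpr zero_le_one) zero_lt_one
    linarith [hφ0]
  have hφ1 : φ 1 = C * ∑ i, (p i * (Real.log (p i) - Real.log (q i)) - p i + q i)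
      - (f p - f q - f' q (p - q)) := by
    simp [hφdef, hAdef, hBdef, hx1, hv]
  have hlog : ∀ i : Fin m, p i * Real.log (p i / q i) - p i + q i
      = p i * (Real.log (p i) - Real.log (q i)) - p i + q i := by
    intro i
    rw [Real.log_div (hp i).1.ne' (hq i).1.ne']
  simp only [hlog]
  rw [hφ1] at hfinal
  linarith
end

section
/- Let Q be a symmetric positive definite m×m real matrix and C > λ_max(Q), the largest eigenvalue of Q. Then for all p, q ∈ (0,1]^m, C·Σᵢ (pᵢ·log(pᵢ/qᵢ) − pᵢ + qᵢ) ≥ (1/2)(p−q)ᵀQ(p−q). -/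
open Real Set


lemma lemA {x : ℝ} (hx : 0 < x) (hx1 : x ≤ 1) :
    (1 - x)^2 / 2 ≤ x * Real.log x - x + 1 := by
  set f : ℝ → ℝ := fun t => t * Real.log t - t + 1 - (1 - t)^2 / 2 with hf
  have hderiv : ∀ t : ℝ, 0 < t → HasDerivAt f (Real.log t + (1 - t)) t := by
    intro t ht0
    have h1 : HasDerivAt (fun t : ℝ => t * Real.log t) (1 * Real.log t + t * t⁻¹) t :=
      (hasDerivAt_id t).mul (Real.hasDerivAt_log (ne_of_gt ht0))
    have h2 : HasDerivAt (fun t : ℝ => (1 - t)^2) (2 * (1 - t) * (-1)) t := by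
      have := ((hasDerivAt_const t (1:ℝ)).sub (hasDerivAt_id t)).pow 2
      exact this.congr_deriv (by norm_num)
    have := ((h1.sub (hasDerivAt_id t)).add_const 1).sub (h2.div_const 2)
    refine this.congr_deriv ?_
    field_simp
    ring
  have key : AntitoneOn f (Icc x 1) := by
    apply antitoneOn_of_deriv_nonpos (convex_Icc x 1)
    · intro t ht
      exact (hderiv t (lt_of_lt_of_le hx ht.1)).continuousAt.continuousWithinAt
    · intro t ht
      rw [interior_Icc] at ht
      exact (hderiv t (lt_trans hx ht.1)).differentiableAt.differentiableWithinAt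
    · intro t ht
      rw [interior_Icc] at ht
      have ht0 : 0 < t := lt_trans hx ht.1
      rw [(hderiv t ht0).deriv]
      have := Real.log_le_sub_one_of_pos ht0
      linarith
  have := key (left_mem_Icc.mpr hx1) (right_mem_Icc.mpr hx1) hx1
  simp [hf] at this
  linarith

lemma lemB {x : ℝ} (hx : 0 < x) (hx1 : x ≤ 1) :
    (1 - x)^2 / 2 ≤ x - 1 - Real.log x := by
  set f : ℝ → ℝ := fun t => t - 1 - Real.log t - (1 - t)^2 / 2 with hf
  have hderiv : ∀ t : ℝ, 0 < t → HasDerivAt f (1 - t⁻¹ + (1 - t)) t := by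
    intro t ht0
    have h2 : HasDerivAt (fun t : ℝ => (1 - t)^2) (2 * (1 - t) * (-1)) t := by
      have := ((hasDerivAt_const t (1:ℝ)).sub (hasDerivAt_id t)).pow 2
      exact this.congr_deriv (by norm_num)
    have := (((hasDerivAt_id t).sub (hasDerivAt_const t 1)).sub
      (Real.hasDerivAt_log (ne_of_gt ht0))).sub (h2.div_const 2)
    refine this.congr_deriv ?_
    ring
  have key : AntitoneOn f (Icc x 1) := by
    apply antitoneOn_of_deriv_nonpos (convex_Icc x 1)
    · intro t ht
      exact (hderiv t (lt_of_lt_of_le hx ht.1)).continuousAt.continuousWithinAt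
    · intro t ht
      rw [interior_Icc] at ht
      exact (hderiv t (lt_trans hx ht.1)).differentiableAt.differentiableWithinAt
    · intro t ht
      rw [interior_Icc] at ht
      have ht0 : 0 < t := lt_trans hx ht.1
      rw [(hderiv t ht0).deriv]
      have : 1 - t⁻¹ + (1 - t) = -(1 - t)^2 / t := by field_simp; ring
      rw [this]
      exact div_nonpos_of_nonpos_of_nonneg (neg_nonpos.mpr (sq_nonneg _)) ht0.le
  have := key (left_mem_Icc.mpr hx1) (right_mem_Icc.mpr hx1) hx1
  simp [hf] at this
  linarith

lemma pointwise_kl {p q : ℝ} (hp : p ∈ Ioc (0:ℝ) 1) (hq : q ∈ Ioc (0:ℝ) 1) :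
    (p - q)^2 / 2 ≤ p * Real.log (p / q) - p + q := by
  obtain ⟨hp0, hp1⟩ := hp
  obtain ⟨hq0, hq1⟩ := hq
  rcases le_or_gt p q with h | h
  · have hx0 : 0 < p / q := div_pos hp0 hq0
    have hx1 : p / q ≤ 1 := (div_le_one hq0).mpr h
    have hA := lemA hx0 hx1
    have e1 : q * ((p/q) * Real.log (p/q) - p/q + 1) = p * Real.log (p/q) - p + q := by
      field_simp
    have e2 : q^2 * ((1 - p/q)^2 / 2) = (p - q)^2 / 2 := by
      field_simp
      ring
    calc (p-q)^2/2 = q^2 * ((1 - p/q)^2/2) := e2.symm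
      _ ≤ q * ((1 - p/q)^2/2) := by nlinarith [sq_nonneg (1 - p/q)]
      _ ≤ q * ((p/q) * Real.log (p/q) - p/q + 1) := mul_le_mul_of_nonneg_left hA hq0.le
      _ = p * Real.log (p/q) - p + q := e1
  · have hx0 : 0 < q / p := div_pos hq0 hp0
    have hx1 : q / p ≤ 1 := (div_le_one hp0).mpr h.le
    have hB := lemB hx0 hx1
    have hlog : Real.log (p/q) = -Real.log (q/p) := by
      rw [← Real.log_inv]
      congr 1
      rw [inv_div]
    have e1 : p * (q/p - 1 - Real.log (q/p)) = p * Real.log (p/q) - p + q := by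
      rw [hlog]
      field_simp
      ring
    have e2 : p^2 * ((1 - q/p)^2 / 2) = (p - q)^2 / 2 := by
      field_simp
    calc (p-q)^2/2 = p^2 * ((1 - q/p)^2/2) := e2.symm
      _ ≤ p * ((1 - q/p)^2/2) := by nlinarith [sq_nonneg (1 - q/p)]
      _ ≤ p * (q/p - 1 - Real.log (q/p)) := mul_le_mul_of_nonneg_left hB hp0.le
      _ = p * Real.log (p/q) - p + q := e1


lemma quad_bound (m : ℕ) (Q : Matrix (Fin m) (Fin m) ℝ) (hQ : Q.PosDef)
    (C : ℝ) (hC : ∀ i, hQ.1.eigenvalues i < C) (x : Fin m → ℝ) :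
    dotProduct x (Q.mulVec x) ≤ C * dotProduct x x := by
  set U : Matrix (Fin m) (Fin m) ℝ := (hQ.1.eigenvectorUnitary : Matrix (Fin m) (Fin m) ℝ) with hU
  have hspec := hQ.1.spectral_theorem
  simp only [Unitary.conjStarAlgAut_apply] at hspec
  have hUU : U * star U = 1 := (Matrix.mem_unitaryGroup_iff).mp hQ.1.eigenvectorUnitary.2
  have hD : C • (1 : Matrix (Fin m) (Fin m) ℝ) - Q
      = U * Matrix.diagonal (fun i => C - hQ.1.eigenvalues i) * star U := by
    have h1 : Matrix.diagonal (fun i => C - hQ.1.eigenvalues i)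
        = C • (1 : Matrix (Fin m) (Fin m) ℝ)
          - Matrix.diagonal (RCLike.ofReal ∘ hQ.1.eigenvalues) := by
      ext i j
      by_cases h : i = j <;>
        simp [Matrix.diagonal_apply, Matrix.one_apply, Matrix.sub_apply, Matrix.smul_apply, h]
    rw [h1, Matrix.mul_sub, Matrix.sub_mul, ← hspec]
    congr 1
    rw [Matrix.mul_smul, Matrix.smul_mul, mul_one, hUU]
  have hpsd : Matrix.PosSemidef (C • (1 : Matrix (Fin m) (Fin m) ℝ) - Q) := by
    rw [hD, Matrix.star_eq_conjTranspose]
    exact (Matrix.PosSemidef.diagonal (fun i => sub_nonneg.mpr (hC i).le)).mul_mul_conjTranspose_same U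
  have := hpsd.dotProduct_mulVec_nonneg x
  have hstar : star x = x := rfl
  rw [hstar, Matrix.sub_mulVec, dotProduct_sub, Matrix.smul_mulVec, Matrix.one_mulVec,
    dotProduct_smul] at this
  simp only [smul_eq_mul] at this
  linarith


theorem kl_dominates_mahalanobis
    (m : ℕ) (Q : Matrix (Fin m) (Fin m) ℝ) (hQ : Q.PosDef)
    (C : ℝ) (hC : ∀ i, hQ.1.eigenvalues i < C) :
    ∀ p q : Fin m → ℝ, (∀ i, p i ∈ Ioc (0:ℝ) 1) → (∀ i, q i ∈ Ioc (0:ℝ) 1) →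
      (1 / 2) * (dotProduct (p - q) (Q.mulVec (p - q)))
        ≤ C * ∑ i, (p i * Real.log (p i / q i) - p i + q i) := by
  intro p q hp hq
  rcases Nat.eq_zero_or_pos m with hm | hm
  · subst hm
    simp [dotProduct]
  · have hC0 : 0 < C := lt_trans (hQ.eigenvalues_pos ⟨0, hm⟩) (hC ⟨0, hm⟩)
    have hquad := quad_bound m Q hQ C hC (p - q)
    have hdot : dotProduct (p - q) (p - q) = ∑ i, (p i - q i)^2 := by
      simp [dotProduct, sq, Pi.sub_apply]
    have hsum : ∑ i, (p i - q i)^2 / 2 ≤ ∑ i, (p i * Real.log (p i / q i) - p i + q i) :=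
      Finset.sum_le_sum (fun i _ => pointwise_kl (hp i) (hq i))
    calc (1/2) * dotProduct (p - q) (Q.mulVec (p - q))
        ≤ (1/2) * (C * ∑ i, (p i - q i)^2) := by
          have := hquad
          rw [hdot] at this
          linarith
      _ = C * ∑ i, (p i - q i)^2 / 2 := by
          rw [← Finset.sum_div]
          ring
      _ ≤ C * ∑ i, (p i * Real.log (p i / q i) - p i + q i) :=
          mul_le_mul_of_nonneg_left hsum hC0.le
end

section
/- Let g : (0,1] → ℝ be three times continuously differentiable and strictly convex, and suppose (q−p)·g'''(q) + g''(q) ≥ 0 for all p ∈ [0,1] and q ∈ (0,1). Then g''(q) ≤ g''(1)/q for all q ∈ (0,1). -/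
open Real Set

theorem separable_second_deriv_bound
    (g g' g'' g''' : ℝ → ℝ)
    (hg' : ∀ x ∈ Ioc (0:ℝ) 1, HasDerivWithinAt g (g' x) (Ioc (0:ℝ) 1) x)
    (hg'' : ∀ x ∈ Ioc (0:ℝ) 1, HasDerivWithinAt g' (g'' x) (Ioc (0:ℝ) 1) x)
    (hg''' : ∀ x ∈ Ioc (0:ℝ) 1, HasDerivWithinAt g'' (g''' x) (Ioc (0:ℝ) 1) x)
    (hcont : ContinuousOn g''' (Ioc (0:ℝ) 1))
    (hconv : StrictConvexOn ℝ (Ioc (0:ℝ) 1) g)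
    (hbreg : ∀ p ∈ Icc (0:ℝ) 1, ∀ q ∈ Ioo (0:ℝ) 1, 0 ≤ (q - p) * g''' q + g'' q) :
    ∀ q ∈ Ioo (0:ℝ) 1, g'' q ≤ g'' 1 / q := by
  intro q hq
  set h : ℝ → ℝ := fun x => x * g'' x with hh
  have hint : interior (Ioc (0:ℝ) 1) = Ioo (0:ℝ) 1 := interior_Ioc
  have hnhds : ∀ x ∈ Ioo (0:ℝ) 1, Ioc (0:ℝ) 1 ∈ nhds x := fun x hx =>
    Ioc_mem_nhds hx.1 hx.2
  have hmem : ∀ x ∈ Ioo (0:ℝ) 1, x ∈ Ioc (0:ℝ) 1 := fun x hx => ⟨hx.1, hx.2.le⟩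
  have hderiv : ∀ x ∈ Ioo (0:ℝ) 1, HasDerivAt h (g'' x + x * g''' x) x := by
    intro x hx
    have h1 : HasDerivAt g'' (g''' x) x :=
      (hg''' x (hmem x hx)).hasDerivAt (hnhds x hx)
    have : HasDerivAt (fun y => y * g'' y) (1 * g'' x + x * g''' x) x := (hasDerivAt_id x).mul h1
    simpa [hh, add_comm] using this
  have hcg'' : ContinuousOn g'' (Ioc (0:ℝ) 1) := fun x hx =>
    (hg''' x hx).continuousWithinAt
  have hch : ContinuousOn h (Ioc (0:ℝ) 1) :=
    continuousOn_id.mul hcg''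
  have hmono : MonotoneOn h (Ioc (0:ℝ) 1) := by
    apply monotoneOn_of_deriv_nonneg (convex_Ioc 0 1) hch
    · rw [hint]
      intro x hx
      exact (hderiv x hx).differentiableAt.differentiableWithinAt
    · rw [hint]
      intro x hx
      rw [(hderiv x hx).deriv]
      have := hbreg 0 ⟨le_refl 0, zero_le_one⟩ x hx
      linarith
  have hle : h q ≤ h 1 := hmono (hmem q hq) ⟨zero_lt_one, le_refl 1⟩ hq.2.le
  rw [le_div_iff₀ hq.1]
  simpa [hh, mul_comm] using hle
end

section
/- Let g : (0,1] → ℝ be C³, strictly convex, with g''(q) ≤ g''(1)/q for all q ∈ (0,1), and let C > g''(1). Then for all p, q ∈ (0,1), C·(p·log(p/q) − p + q) ≥ g(p) − g(q) − (p−q)g'(q). -/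
open Real Set

theorem separable_kl_dominates_bregman_1d
    (g g' g'' g''' : ℝ → ℝ) (C : ℝ)
    (hg' : ∀ x ∈ Ioc (0:ℝ) 1, HasDerivWithinAt g (g' x) (Ioc (0:ℝ) 1) x)
    (hg'' : ∀ x ∈ Ioc (0:ℝ) 1, HasDerivWithinAt g' (g'' x) (Ioc (0:ℝ) 1) x)
    (hg''' : ∀ x ∈ Ioc (0:ℝ) 1, HasDerivWithinAt g'' (g''' x) (Ioc (0:ℝ) 1) x)
    (hcont : ContinuousOn g''' (Ioc (0:ℝ) 1))
    (hconv : StrictConvexOn ℝ (Ioc (0:ℝ) 1) g)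
    (hbound : ∀ q ∈ Ioo (0:ℝ) 1, g'' q ≤ g'' 1 / q)
    (hC : g'' 1 < C) :
    ∀ p ∈ Ioo (0:ℝ) 1, ∀ q ∈ Ioo (0:ℝ) 1,
      g p - g q - (p - q) * g' q ≤ C * (p * Real.log (p / q) - p + q) := by
  intro p hp q hq
  set r : ℝ → ℝ := fun x => C * (p * Real.log (p / x) - p + x) - g p + g x + (p - x) * g' x
    with hr_def
  -- derivative of r at any x ∈ Ioo 0 1
  have hr : ∀ x ∈ Ioo (0:ℝ) 1, HasDerivAt r ((x - p) * (C / x - g'' x)) x := by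
    intro x hx
    have hxI : x ∈ Ioc (0:ℝ) 1 := ⟨hx.1, hx.2.le⟩
    have hnhds : Ioc (0:ℝ) 1 ∈ nhds x := Ioc_mem_nhds hx.1 hx.2
    have hgx : HasDerivAt g (g' x) x := (hg' x hxI).hasDerivAt hnhds
    have hgx' : HasDerivAt g' (g'' x) x := (hg'' x hxI).hasDerivAt hnhds
    have hlog : HasDerivAt (fun y => Real.log (p / y)) (-(1/x)) x := by
      have h1 : HasDerivAt (fun y : ℝ => p / y) (-(p / x^2)) x := by
        have := (hasDerivAt_inv (ne_of_gt hx.1)).const_mul p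
        simp only [div_eq_mul_inv]
        refine this.congr_deriv ?_
        field_simp
      have hpx : p / x ≠ 0 := div_ne_zero (ne_of_gt hp.1) (ne_of_gt hx.1)
      have := (Real.hasDerivAt_log hpx).comp x h1
      refine this.congr_deriv ?_
      field_simp [ne_of_gt hp.1, ne_of_gt hx.1]
    have h1 : HasDerivAt (fun y => C * (p * Real.log (p / y) - p + y))
        (C * (p * (-(1/x)) + 1)) x :=
      (((hlog.const_mul p).sub_const p).add (hasDerivAt_id x)).const_mul C
    have h2 : HasDerivAt (fun y => (p - y) * g' y)
        ((0 - 1) * g' x + (p - x) * g'' x) x :=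
      ((hasDerivAt_const x p).sub (hasDerivAt_id x)).mul hgx'
    have := ((h1.sub_const (g p)).add hgx).add h2
    refine this.congr_deriv ?_
    field_simp [ne_of_gt hx.1]
    ring
  -- sign of the second factor
  have hpos : ∀ x ∈ Ioo (0:ℝ) 1, 0 < C / x - g'' x := by
    intro x hx
    have h1 : g'' x ≤ g'' 1 / x := hbound x hx
    have h2 : g'' 1 / x < C / x := by
      apply div_lt_div_of_pos_right hC hx.1
    linarith
  have hrp : r p = 0 := by
    have : p / p = 1 := div_self (ne_of_gt hp.1)
    simp [hr_def, this]
  have key : r p ≤ r q := by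
    rcases lt_trichotomy q p with h | h | h
    · -- r strictly antitone on [q, p]
      have hsub : Icc q p ⊆ Ioo (0:ℝ) 1 := fun x hx => ⟨lt_of_lt_of_le hq.1 hx.1, lt_of_le_of_lt hx.2 hp.2⟩
      have hanti : StrictAntiOn r (Icc q p) := by
        apply strictAntiOn_of_deriv_neg (convex_Icc q p)
        · exact fun x hx => ((hr x (hsub hx)).continuousAt).continuousWithinAt
        · intro x hx
          rw [interior_Icc] at hx
          have hx' : x ∈ Ioo (0:ℝ) 1 := hsub ⟨hx.1.le, hx.2.le⟩
          rw [(hr x hx').deriv]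
          have := hpos x hx'
          nlinarith [hx.2]
      exact (hanti ⟨le_refl q, h.le⟩ ⟨h.le, le_refl p⟩ h).le
    · simp [h]
    · have hsub : Icc p q ⊆ Ioo (0:ℝ) 1 := fun x hx => ⟨lt_of_lt_of_le hp.1 hx.1, lt_of_le_of_lt hx.2 hq.2⟩
      have hmono : StrictMonoOn r (Icc p q) := by
        apply strictMonoOn_of_deriv_pos (convex_Icc p q)
        · exact fun x hx => ((hr x (hsub hx)).continuousAt).continuousWithinAt
        · intro x hx
          rw [interior_Icc] at hx
          have hx' : x ∈ Ioo (0:ℝ) 1 := hsub ⟨hx.1.le, hx.2.le⟩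
          rw [(hr x hx').deriv]
          have := hpos x hx'
          nlinarith [hx.1]
      exact (hmono ⟨le_refl p, h.le⟩ ⟨h.le, le_refl q⟩ h).le
  rw [hrp] at key
  simp only [hr_def] at key
  linarith
end

section
/- For all p, q ∈ (0,1]^m, Σᵢ (pᵢ·log(pᵢ/qᵢ) − pᵢ + qᵢ) ≥ (1/2)·Σᵢ (pᵢ − qᵢ)². -/
open Real Set

private lemma kl_deriv (qq : ℝ) (x : ℝ) (hx : 0 < x) :
    HasDerivAt (fun y : ℝ => y * (Real.log y - Real.log qq) - y + qq - (y - qq) ^ 2 / 2)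
      (Real.log x - Real.log qq - (x - qq)) x := by
  have h1 : HasDerivAt (fun y : ℝ => y * Real.log y) (Real.log x + 1) x :=
    Real.hasDerivAt_mul_log hx.ne'
  have h2 : HasDerivAt (fun y : ℝ => y * Real.log qq) (Real.log qq) x := by
    simpa using (hasDerivAt_id x).mul_const (Real.log qq)
  have h3 : HasDerivAt (fun y : ℝ => (y - qq) ^ 2 / 2) (x - qq) x := by
    have : HasDerivAt (fun y : ℝ => (y - qq) ^ 2) (2 * (x - qq) ^ 1 * 1) x := by
      exact ((hasDerivAt_id x).sub_const qq).pow 2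
    have := this.div_const 2
    simpa [mul_comm] using this
  have h4 : HasDerivAt (fun y : ℝ => y * (Real.log y - Real.log qq) - y + qq)
      ((Real.log x + 1) - Real.log qq - 1 + 0) x := by
    have := ((h1.sub h2).sub (hasDerivAt_id x)).add_const qq
    simpa [mul_sub] using this
  have := h4.sub h3
  refine this.congr_deriv ?_
  ring

private lemma kl_pointwise (a b : ℝ) (ha : a ∈ Ioc (0:ℝ) 1) (hb : b ∈ Ioc (0:ℝ) 1) :
    (a - b) ^ 2 / 2 ≤ a * Real.log (a / b) - a + b := by
  obtain ⟨ha0, ha1⟩ := ha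
  obtain ⟨hb0, hb1⟩ := hb
  set F : ℝ → ℝ := fun y => y * (Real.log y - Real.log b) - y + b - (y - b) ^ 2 / 2 with hF
  have hFb : F b = 0 := by simp [hF]
  have hFa : F a = a * Real.log (a / b) - a + b - (a - b) ^ 2 / 2 := by
    rw [hF]; rw [Real.log_div ha0.ne' hb0.ne']
  have key : 0 ≤ F a := by
    rcases le_total a b with hab | hab
    · -- F antitone on [a, b]
      have hcont : ContinuousOn F (Icc a b) := fun x hx =>
        ((kl_deriv b x (lt_of_lt_of_le ha0 hx.1)).continuousAt).continuousWithinAt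
      have hanti : AntitoneOn F (Icc a b) := by
        apply antitoneOn_of_deriv_nonpos (convex_Icc a b) hcont
        · intro x hx
          rw [interior_Icc] at hx
          exact ((kl_deriv b x (ha0.trans hx.1)).differentiableAt).differentiableWithinAt
        · intro x hx
          rw [interior_Icc] at hx
          have hx0 : 0 < x := ha0.trans hx.1
          rw [(kl_deriv b x hx0).deriv]
          have hlog : Real.log x - Real.log b ≤ (x - b) / b := by
            rw [← Real.log_div hx0.ne' hb0.ne']
            have := Real.log_le_sub_one_of_pos (div_pos hx0 hb0)
            calc Real.log (x / b) ≤ x / b - 1 := this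
              _ = (x - b) / b := by field_simp
          have h2 : (x - b) / b ≤ x - b := by
            rw [div_le_iff₀ hb0]
            nlinarith [hx.2]
          linarith
      have := hanti (left_mem_Icc.mpr hab) (right_mem_Icc.mpr hab) hab
      rw [hFb] at this; linarith
    · -- F monotone on [b, a]
      have hcont : ContinuousOn F (Icc b a) := fun x hx =>
        ((kl_deriv b x (lt_of_lt_of_le hb0 hx.1)).continuousAt).continuousWithinAt
      have hmono : MonotoneOn F (Icc b a) := by
        apply monotoneOn_of_deriv_nonneg (convex_Icc b a) hcont
        · intro x hx
          rw [interior_Icc] at hx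
          exact ((kl_deriv b x (hb0.trans hx.1)).differentiableAt).differentiableWithinAt
        · intro x hx
          rw [interior_Icc] at hx
          have hx0 : 0 < x := hb0.trans hx.1
          have hx1 : x ≤ 1 := le_of_lt (hx.2.trans_le ha1)
          rw [(kl_deriv b x hx0).deriv]
          have hlog : (x - b) / x ≤ Real.log x - Real.log b := by
            rw [← Real.log_div hx0.ne' hb0.ne']
            have := Real.log_le_sub_one_of_pos (div_pos hb0 hx0)
            have hrw : Real.log (b / x) = - Real.log (x / b) := by
              rw [← Real.log_inv]; congr 1; field_simp
            rw [hrw] at this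
            have : 1 - b / x ≤ Real.log (x / b) := by linarith
            calc (x - b) / x = 1 - b / x := by field_simp
              _ ≤ Real.log (x / b) := this
          have h2 : x - b ≤ (x - b) / x := by
            rw [le_div_iff₀ hx0]
            nlinarith [hx.1]
          linarith
      have := hmono (left_mem_Icc.mpr hab) (right_mem_Icc.mpr hab) hab
      rw [hFb] at this; linarith
  rw [hFa] at key; linarith

theorem generalized_kl_ge_half_sq_dist
    (m : ℕ) (p q : Fin m → ℝ)
    (hp : ∀ i, p i ∈ Ioc (0:ℝ) 1) (hq : ∀ i, q i ∈ Ioc (0:ℝ) 1) :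
    (1 / 2) * ∑ i, (p i - q i) ^ 2
      ≤ ∑ i, (p i * Real.log (p i / q i) - p i + q i) := by
  rw [Finset.mul_sum]
  apply Finset.sum_le_sum
  intro i _
  have := kl_pointwise (p i) (q i) (hp i) (hq i)
  linarith
end

section
/- For a single coordinate: for all p ∈ [0,1] and q ∈ (0,1], p·log(p/q) − p + q ≥ (1/2)(p − q)², with the convention 0·log 0 = 0. -/
open Real Set

theorem generalized_kl_1d_ge_half_sq
    (p q : ℝ) (hp : p ∈ Icc (0:ℝ) 1) (hq : q ∈ Ioc (0:ℝ) 1) :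
    (1 / 2) * (p - q) ^ 2 ≤ p * Real.log (p / q) - p + q := by
  obtain ⟨hp0, hp1⟩ := hp
  obtain ⟨hq0, hq1⟩ := hq
  rcases eq_or_lt_of_le hp0 with h0 | hp0
  · rw [← h0]
    simp
    nlinarith
  set f : ℝ → ℝ := fun x => x * (Real.log x - Real.log q) - x + q - (1/2)*(x-q)^2 with hf
  have hderiv : ∀ x : ℝ, 0 < x →
      HasDerivAt f (Real.log x - Real.log q - (x - q)) x := by
    intro x hx
    have h1 : HasDerivAt (fun y : ℝ => y * (Real.log y - Real.log q))
        (1 * (Real.log x - Real.log q) + x * x⁻¹) x :=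
      (hasDerivAt_id x).mul ((Real.hasDerivAt_log hx.ne').sub_const _)
    have h2 : HasDerivAt (fun y : ℝ => (1/2)*(y-q)^2) (x - q) x := by
      have := ((hasDerivAt_id x).sub_const q).pow 2
      have h3 := this.const_mul (1/2 : ℝ)
      refine h3.congr_deriv ?_
      simp [id]
    have h4 := ((h1.sub (hasDerivAt_id x)).add_const q).sub h2
    refine h4.congr_deriv ?_
    field_simp
    ring
  have hcont : ∀ s : Set ℝ, s ⊆ Ioi (0:ℝ) → ContinuousOn f s := by
    intro s hs
    intro x hx
    exact ((hderiv x (hs hx)).continuousAt).continuousWithinAt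
  have hfq : f q = 0 := by simp [hf]
  have key : 0 ≤ f p := by
    rcases le_total p q with hpq | hpq
    · have hanti : AntitoneOn f (Ioc 0 q) := by
        apply antitoneOn_of_deriv_nonpos (convex_Ioc 0 q)
        · exact hcont _ (fun x hx => hx.1)
        · intro x hx
          rw [interior_Ioc] at hx
          exact (hderiv x hx.1).differentiableAt.differentiableWithinAt
        · intro x hx
          rw [interior_Ioc] at hx
          rw [(hderiv x hx.1).deriv]
          have hlog : Real.log x - Real.log q ≤ (x - q) / q := by
            have := Real.log_le_sub_one_of_pos (x := x / q) (div_pos hx.1 hq0)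
            rw [Real.log_div hx.1.ne' hq0.ne'] at this
            have : Real.log x - Real.log q ≤ x / q - 1 := this
            rw [div_sub_one hq0.ne'] at this
            exact this
          have h5 : (x - q) / q ≤ x - q := by
            rw [div_le_iff₀ hq0]
            nlinarith [hx.2]
          linarith
      have := hanti ⟨hp0, hpq⟩ ⟨hq0, le_refl q⟩ hpq
      linarith [hfq ▸ this]
    · have hmono : MonotoneOn f (Icc q 1) := by
        apply monotoneOn_of_deriv_nonneg (convex_Icc q 1)
        · exact hcont _ (fun x hx => lt_of_lt_of_le hq0 hx.1)
        · intro x hx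
          rw [interior_Icc] at hx
          exact (hderiv x (lt_trans hq0 hx.1)).differentiableAt.differentiableWithinAt
        · intro x hx
          rw [interior_Icc] at hx
          have hx0 : 0 < x := lt_trans hq0 hx.1
          rw [(hderiv x hx0).deriv]
          have hlog : (x - q) / x ≤ Real.log x - Real.log q := by
            have h := Real.log_le_sub_one_of_pos (x := q / x) (div_pos hq0 hx0)
            rw [Real.log_div hq0.ne' hx0.ne', div_sub_one hx0.ne'] at h
            have h7 : (x - q) / x = -((q - x) / x) := by ring
            linarith
          have h5 : x - q ≤ (x - q) / x := by
            rw [le_div_iff₀ hx0]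
            nlinarith [hx.2, hx.1]
          linarith
      have := hmono ⟨le_refl q, le_trans hpq hp1⟩ ⟨hpq, hp1⟩ hpq
      linarith [hfq ▸ this]
  have hlogd : Real.log (p / q) = Real.log p - Real.log q :=
    Real.log_div hp0.ne' hq0.ne'
  rw [hlogd]
  have : f p = p * (Real.log p - Real.log q) - p + q - (1/2)*(p-q)^2 := rfl
  linarith [this ▸ key]
end
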